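/- arXiv:2412.08038 — 2 statements merged into one kernel-verified Lean document; each statement's English description precedes it below -/
import Mathlib

section
/- Let A ∈ ℝ^{n×n} be row-stochastic, irreducible and aperiodic, and let W ∈ ℝ^{d×d} have operator norm strictly less than 1. Then the iteration H^{(l+1)} = A H^{(l)} W converges to the zero matrix for every initial H^{(0)} ∈ ℝ^{n×d}. -/
/-!
Measure a feature matrix by the largest Euclidean norm of its rows. Right multiplication by `W`
applies `Wᵀ` to every row, which scales each row norm by at most `‖Wᵀ‖ = ‖W‖ < 1`; left
multiplication by a row-stochastic `A` replaces every row by a convex combination of rows, which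
does not increase the largest row norm. Hence this norm of `H l` decays like `‖W‖ ^ l`.
-/

open Filter Matrix Topology

namespace Matrix

variable {ι κ μ : Type*}

/-- Under the sup norm of `ι → EuclideanSpace ℝ κ`, `‖euclideanRows M‖` is the largest Euclidean
norm of a row of `M`. -/
def euclideanRows (M : Matrix ι κ ℝ) : ι → EuclideanSpace ℝ κ :=
  fun i => WithLp.toLp 2 (M i)

lemma tendsto_zero_of_tendsto_euclideanRows {α : Type*} {l : Filter α} {H : α → Matrix ι κ ℝ}
    (h : Tendsto (fun a => euclideanRows (H a)) l (𝓝 0)) : Tendsto H l (𝓝 0) := by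
  have hcont : Continuous fun R : ι → EuclideanSpace ℝ κ => fun i => WithLp.ofLp (R i) := by
    fun_prop
  exact (hcont.tendsto 0).comp h

variable [Fintype ι] [Fintype κ] [Fintype μ]

open scoped Matrix.Norms.L2Operator in
lemma norm_euclideanRows_mul_le [DecidableEq μ] (M : Matrix ι κ ℝ) (W : Matrix κ μ ℝ) :
    ‖euclideanRows (M * W)‖ ≤ ‖W‖ * ‖euclideanRows M‖ := by
  classical
  refine (pi_norm_le_iff_of_nonneg (by positivity)).2 fun i => ?_
  have hrow : euclideanRows (M * W) i = (EuclideanSpace.equiv μ ℝ).symm (Wᴴ *ᵥ M i) := by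
    rw [conjTranspose_eq_transpose_of_trivial, mulVec_transpose]
    rfl
  calc ‖euclideanRows (M * W) i‖
      ≤ ‖Wᴴ‖ * ‖euclideanRows M i‖ := hrow ▸ l2_opNorm_mulVec Wᴴ (euclideanRows M i)
    _ ≤ ‖W‖ * ‖euclideanRows M‖ := by
      rw [l2_opNorm_conjTranspose]
      gcongr
      exact norm_le_pi_norm (euclideanRows M) i

lemma norm_euclideanRows_mul_le_of_sum_abs_le_one {A : Matrix μ ι ℝ}
    (hA : ∀ i, ∑ j, |A i j| ≤ 1) (M : Matrix ι κ ℝ) :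
    ‖euclideanRows (A * M)‖ ≤ ‖euclideanRows M‖ := by
  refine (pi_norm_le_iff_of_nonneg (norm_nonneg _)).2 fun i => ?_
  have hrow : euclideanRows (A * M) i = ∑ j, A i j • euclideanRows M j := by
    ext k
    simp [euclideanRows, mul_apply]
  calc ‖euclideanRows (A * M) i‖
      ≤ ∑ j, |A i j| * ‖euclideanRows M j‖ := by
        rw [hrow]
        refine (norm_sum_le _ _).trans_eq ?_
        simp only [norm_smul, Real.norm_eq_abs]
    _ ≤ ∑ j, |A i j| * ‖euclideanRows M‖ := by
        gcongr with j
        exact norm_le_pi_norm (euclideanRows M) j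
    _ ≤ ‖euclideanRows M‖ := by
        rw [← Finset.sum_mul]
        exact mul_le_of_le_one_left (norm_nonneg _) (hA i)

end Matrix

theorem stmt1_general (n d : ℕ) (A : Matrix (Fin n) (Fin n) ℝ)
    (W : Matrix (Fin d) (Fin d) ℝ)
    (hnonneg : ∀ i j, 0 ≤ A i j)
    (hrow : ∀ i, ∑ j, A i j = 1)
    (hW : ‖Matrix.toEuclideanCLM (𝕜 := ℝ) W‖ < 1)
    (H : ℕ → Matrix (Fin n) (Fin d) ℝ)
    (hrec : ∀ l, H (l + 1) = A * H l * W) :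
    Tendsto H atTop (𝓝 0) := by
  set r := ‖Matrix.toEuclideanCLM (𝕜 := ℝ) W‖
  have hA : ∀ i, ∑ j, |A i j| ≤ 1 := fun i => by
    simp only [abs_of_nonneg (hnonneg i _), hrow i, le_refl]
  have hstep : ∀ l, ‖euclideanRows (H (l + 1))‖ ≤ r * ‖euclideanRows (H l)‖ := fun l =>
    calc ‖euclideanRows (H (l + 1))‖
        ≤ r * ‖euclideanRows (A * H l)‖ := hrec l ▸ norm_euclideanRows_mul_le (A * H l) W
      _ ≤ r * ‖euclideanRows (H l)‖ := by
        gcongr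
        exact norm_euclideanRows_mul_le_of_sum_abs_le_one hA (H l)
  have hdecay : Tendsto (fun l => r ^ l * ‖euclideanRows (H 0)‖) atTop (𝓝 0) := by
    simpa using (tendsto_pow_atTop_nhds_zero_of_lt_one (norm_nonneg _) hW).mul_const _
  refine tendsto_zero_of_tendsto_euclideanRows (squeeze_zero_norm (fun l => ?_) hdecay)
  exact le_geom (u := fun l => ‖euclideanRows (H l)‖) (norm_nonneg _) l fun k _ => hstep k

theorem stmt1 (n d : ℕ) (A : Matrix (Fin n) (Fin n) ℝ)
    (W : Matrix (Fin d) (Fin d) ℝ)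
    (hnonneg : ∀ i j, 0 ≤ A i j)
    (hrow : ∀ i, ∑ j, A i j = 1)
    (hprim : ∃ L : ℕ, ∀ i j, 0 < (A ^ L) i j)
    (hW : ‖Matrix.toEuclideanCLM (𝕜 := ℝ) W‖ < 1)
    (H : ℕ → Matrix (Fin n) (Fin d) ℝ)
    (hrec : ∀ l, H (l + 1) = A * H l * W) :
    Tendsto H atTop (𝓝 0) :=
  stmt1_general n d A W hnonneg hrow hW H hrec
end

section
/- Consider two nodes i and j of the same type in the PAGNN simplified model with zero weight matrices: h_v^{(1)} = h_v^{(0)} + |N(v)|·B^{[φ(v)]}. If i and j have the same type φ(i) = φ(j) = t but different degrees |N(i)| ≠ |N(j)|, the bias B^{[t]} is nonzero, and the initial features satisfy h_i^{(0)} = h_j^{(0)} = x where x and B^{[t]} are linearly independent, then h_i^{(1)} and h_j^{(1)} are linearly independent. -/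
theorem stmt7 (d : ℕ) (x B : Fin d → ℝ) (di dj : ℕ)
    (hdi : 0 < di) (hdj : 0 < dj) (hne : di ≠ dj) (hB : B ≠ 0)
    (hli : LinearIndependent ℝ ![x, B])
    (hi hj : Fin d → ℝ)
    (hhi : hi = x + (di : ℝ) • B) (hhj : hj = x + (dj : ℝ) • B) :
    LinearIndependent ℝ ![hi, hj] := by
  subst hhi hhj
  rw [LinearIndependent.pair_iff] at hli ⊢
  intro s t hst
  have h : (s + t) • x + (s * di + t * dj) • B = 0 := by
    rw [add_smul, add_smul, mul_smul, mul_smul]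
    convert hst using 1
    module
  obtain ⟨h1, h2⟩ := hli _ _ h
  have hij : (di : ℝ) ≠ (dj : ℝ) := by exact_mod_cast hne
  have hs : s = 0 := by
    have : s * ((di : ℝ) - dj) = 0 := by nlinarith [h1, h2]
    rcases mul_eq_zero.1 this with h | h
    · exact h
    · exact absurd (sub_eq_zero.1 h) hij
  constructor
  · exact hs
  · linarith [h1]
end
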